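/- arXiv:1005.0736 — 3 statements merged into one kernel-verified Lean document; each statement's English description precedes it below -/
import Mathlib

section
/- (Singular value decomposition over the quaternions.) For every quaternion matrix A ∈ ℍ^{m×n} there exist unitary quaternion matrices V ∈ ℍ^{m×m} and W ∈ ℍ^{n×n} and a matrix Σ ∈ ℍ^{m×n} such that: Σᵢⱼ = 0 whenever i ≠ j (as natural number indices); every diagonal entry Σᵢᵢ is a nonnegative real number; the diagonal entries are nonincreasing (Σᵢᵢ ≥ Σⱼⱼ as reals whenever i ≤ j); and A = V·Σ·Wᴴ. -/
/-!
Viewed as a real inner product space, `ℍⁿ` carries `v ↦ A v` as a real-linear map whose adjoint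
is `v ↦ Aᴴ v`. The largest eigenvalue `σ²` of the Gram operator `AᴴA` gives unit vectors `x`, `y`
with `A x = σ y`, `Aᴴ y = σ x` and `‖A v‖ ≤ σ ‖v‖` for all `v`. Householder reflections complete
`x` and `y` to unitary matrices `W`, `V`, and then `Vᴴ A W` splits as `σ ⊕ A'`. Recursing on `A'`
yields the decomposition; its diagonal entries are values `‖A w‖` at unit vectors `w`, hence at
most `σ`, which makes the diagonal nonincreasing.
-/

open Matrix Quaternion

namespace Matrix

variable {α : Type*}

theorem mem_unitary_iff_conjTranspose {n : Type*} [Fintype n] [DecidableEq n] [Semiring α]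
    [StarRing α] {U : Matrix n n α} : U ∈ unitary (Matrix n n α) ↔ Uᴴ * U = 1 ∧ U * Uᴴ = 1 :=
  Unitary.mem_iff

theorem diagonal_mem_unitary {n : Type*} [Fintype n] [DecidableEq n] [Semiring α] [StarRing α]
    {d : n → α} (hd : ∀ i, d i ∈ unitary α) : diagonal d ∈ unitary (Matrix n n α) := by
  refine Unitary.mem_iff.mpr ⟨?_, ?_⟩ <;>
  · rw [star_eq_conjTranspose, diagonal_conjTranspose, diagonal_mul_diagonal, ← diagonal_one]
    congr 1
    funext i
    simp [hd i]

def diagCons [Zero α] {p q : ℕ} (a : α) (M : Matrix (Fin p) (Fin q) α) :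
    Matrix (Fin (p + 1)) (Fin (q + 1)) α :=
  of (Fin.cons (Fin.cons a 0) fun i => Fin.cons 0 (M i))

section diagCons

variable {p q r : ℕ}

@[simp] theorem diagCons_zero_zero [Zero α] (a : α) (M : Matrix (Fin p) (Fin q) α) :
    diagCons a M 0 0 = a := rfl

@[simp] theorem diagCons_zero_succ [Zero α] (a : α) (M : Matrix (Fin p) (Fin q) α) (j : Fin q) :
    diagCons a M 0 j.succ = 0 := rfl

@[simp] theorem diagCons_succ_zero [Zero α] (a : α) (M : Matrix (Fin p) (Fin q) α) (i : Fin p) :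
    diagCons a M i.succ 0 = 0 := rfl

@[simp] theorem diagCons_succ_succ [Zero α] (a : α) (M : Matrix (Fin p) (Fin q) α) (i : Fin p)
    (j : Fin q) : diagCons a M i.succ j.succ = M i j := rfl

theorem diagCons_mul_diagCons [NonUnitalNonAssocSemiring α] (a b : α)
    (M : Matrix (Fin p) (Fin q) α) (N : Matrix (Fin q) (Fin r) α) :
    diagCons a M * diagCons b N = diagCons (a * b) (M * N) := by
  ext i j : 1
  refine Fin.cases ?_ (fun i => ?_) i <;> refine Fin.cases ?_ (fun j => ?_) j <;>
    simp [mul_apply, Fin.sum_univ_succ]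

theorem conjTranspose_diagCons [AddMonoid α] [StarAddMonoid α] (a : α)
    (M : Matrix (Fin p) (Fin q) α) : (diagCons a M)ᴴ = diagCons (star a) Mᴴ := by
  ext i j : 1
  refine Fin.cases ?_ (fun i => ?_) i <;> refine Fin.cases ?_ (fun j => ?_) j <;> simp

theorem diagCons_one_one [Zero α] [One α] :
    diagCons (1 : α) (1 : Matrix (Fin p) (Fin p) α) = 1 := by
  ext i j : 1
  refine Fin.cases ?_ (fun i => ?_) i <;> refine Fin.cases ?_ (fun j => ?_) j <;>
    simp [one_apply, Fin.succ_ne_zero, (Fin.succ_ne_zero _).symm]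

theorem diagCons_one_mul_diagCons_mul_conjTranspose [Semiring α] [StarRing α] (a : α)
    (U : Matrix (Fin p) (Fin p) α) (M : Matrix (Fin p) (Fin q) α)
    (U' : Matrix (Fin q) (Fin q) α) :
    diagCons 1 U * diagCons a M * (diagCons 1 U')ᴴ = diagCons a (U * M * U'ᴴ) := by
  rw [conjTranspose_diagCons, diagCons_mul_diagCons, diagCons_mul_diagCons, star_one, one_mul,
    mul_one]

theorem diagCons_one_mem_unitary [Semiring α] [StarRing α] {U : Matrix (Fin p) (Fin p) α}
    (hU : U ∈ unitary _) : diagCons 1 U ∈ unitary _ := by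
  refine Unitary.mem_iff.mpr ⟨?_, ?_⟩ <;>
    rw [star_eq_conjTranspose, conjTranspose_diagCons, star_one, diagCons_mul_diagCons, mul_one,
      ← star_eq_conjTranspose]
  · rw [Unitary.star_mul_self_of_mem hU, diagCons_one_one]
  · rw [Unitary.mul_star_self_of_mem hU, diagCons_one_one]

theorem diagCons_submatrix_succ [Zero α] (C : Matrix (Fin (p + 1)) (Fin (q + 1)) α)
    (hrow : ∀ j : Fin q, C 0 j.succ = 0) (hcol : ∀ i : Fin p, C i.succ 0 = 0) :
    diagCons (C 0 0) (C.submatrix Fin.succ Fin.succ) = C := by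
  ext i j : 1
  refine Fin.cases ?_ (fun i => ?_) i <;> refine Fin.cases ?_ (fun j => ?_) j <;> simp [*]

end diagCons

def rectDiagonal [Zero α] (m n : ℕ) (d : ℕ → α) : Matrix (Fin m) (Fin n) α :=
  of fun i j => if (i : ℕ) = j then d i else 0

theorem diagCons_rectDiagonal [Zero α] {m n : ℕ} (d : ℕ → α) :
    diagCons (d 0) (rectDiagonal m n fun k => d (k + 1)) = rectDiagonal (m + 1) (n + 1) d := by
  ext i j : 1
  refine Fin.cases ?_ (fun i => ?_) i <;> refine Fin.cases ?_ (fun j => ?_) j <;>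
    simp [rectDiagonal]

end Matrix

theorem antitoneOn_Iio_succ {α : Type*} [Preorder α] {N : ℕ} {s : ℕ → α}
    (hs : AntitoneOn (fun k => s (k + 1)) (Set.Iio N)) (h0 : ∀ k < N, s (k + 1) ≤ s 0) :
    AntitoneOn s (Set.Iio (N + 1)) := by
  rintro (_ | k) hk (_ | l) hl hkl
  · exact le_rfl
  · exact h0 l (by simpa using hl)
  · omega
  · exact hs (by simpa using hk) (by simpa using hl) (by omega)

section SingularPair

open LinearMap

variable {E F : Type*} [NormedAddCommGroup E] [InnerProductSpace ℝ E] [FiniteDimensional ℝ E]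
  [NormedAddCommGroup F] [InnerProductSpace ℝ F] [FiniteDimensional ℝ F]

theorem LinearMap.exists_eigenvector_adjoint_comp_self [Nontrivial E] (f : E →ₗ[ℝ] F) :
    ∃ (μ : ℝ) (v : E), v ≠ 0 ∧ adjoint f (f v) = μ • v ∧ ∀ w, ‖f w‖ ^ 2 ≤ μ * ‖w‖ ^ 2 := by
  set T := adjoint f ∘ₗ f
  have hTw : ∀ w, inner ℝ (T w) w = ‖f w‖ ^ 2 := fun w => by
    rw [comp_apply, adjoint_inner_left, real_inner_self_eq_norm_sq]
  obtain ⟨v, hv⟩ := (isSymmetric_adjoint_comp_self f).hasEigenvalue_iSup_of_finiteDimensional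
    |>.exists_hasEigenvector
  refine ⟨_, v, hv.2, hv.apply_eq_smul, fun w => ?_⟩
  rcases eq_or_ne w 0 with rfl | hw
  · simp
  have hbdd : BddAbove (Set.range fun x : {x : E // x ≠ 0} =>
      RCLike.re (inner ℝ (T x) x) / ‖(x : E)‖ ^ 2) := by
    refine ⟨‖T.toContinuousLinearMap‖, ?_⟩
    rintro _ ⟨x, rfl⟩
    exact (le_abs_self _).trans (T.toContinuousLinearMap.rayleighQuotient_le_norm x)
  rw [← hTw, ← div_le_iff₀ (by positivity)]
  exact le_ciSup hbdd ⟨w, hw⟩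

theorem LinearMap.exists_singular_pair [Nontrivial E] [Nontrivial F] (f : E →ₗ[ℝ] F) :
    ∃ (σ : ℝ) (x : E) (y : F), 0 ≤ σ ∧ ‖x‖ = 1 ∧ ‖y‖ = 1 ∧ f x = σ • y ∧
      adjoint f y = σ • x ∧ ∀ v, ‖f v‖ ≤ σ * ‖v‖ := by
  obtain ⟨μ, v, hv, hfv, hle⟩ := f.exists_eigenvector_adjoint_comp_self
  set x := ‖v‖⁻¹ • v
  have hx : ‖x‖ = 1 := norm_smul_inv_norm hv
  have hfx : adjoint f (f x) = μ • x := by simp only [x, map_smul, hfv, smul_comm μ]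
  have hμ : ‖f x‖ ^ 2 = μ := by
    rw [← real_inner_self_eq_norm_sq, ← adjoint_inner_left, hfx, real_inner_smul_left,
      real_inner_self_eq_norm_sq, hx, one_pow, mul_one]
  set σ := ‖f x‖
  have hbound : ∀ w, ‖f w‖ ≤ σ * ‖w‖ := fun w =>
    (pow_le_pow_iff_left₀ (norm_nonneg _) (by positivity) two_ne_zero).mp
      (by rw [mul_pow, hμ]; exact hle w)
  rcases eq_or_ne σ 0 with hσ | hσ
  · obtain ⟨y, hy⟩ := exists_norm_eq F zero_le_one
    have hf : f = 0 := ext fun w => norm_le_zero_iff.mp (by simpa [hσ] using hbound w)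
    exact ⟨0, x, y, le_rfl, hx, hy, by simp [hf], by simp [hf], by simpa [hσ] using hbound⟩
  · refine ⟨σ, x, σ⁻¹ • f x, norm_nonneg _, hx, ?_, ?_, ?_, hbound⟩
    · rw [norm_smul, norm_inv, norm_norm, inv_mul_cancel₀ hσ]
    · rw [smul_smul, mul_inv_cancel₀ hσ, one_smul]
    · rw [map_smul, hfx, smul_smul, ← hμ, sq, inv_mul_cancel_left₀ hσ]

end SingularPair

theorem Quaternion.re_sum {α : Type*} (s : Finset α) (f : α → ℍ[ℝ]) :
    (∑ i ∈ s, f i).re = ∑ i ∈ s, (f i).re :=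
  map_sum (QuaternionAlgebra.reₗ _ _ _) f s

theorem Quaternion.coe_sum {α : Type*} (s : Finset α) (f : α → ℝ) :
    ((∑ i ∈ s, f i : ℝ) : ℍ[ℝ]) = ∑ i ∈ s, (f i : ℍ[ℝ]) := by
  rw [← algebraMap_def, map_sum]

theorem Quaternion.op_coe_smul {ι : Type*} (c : ℝ) (v : ι → ℍ[ℝ]) :
    MulOpposite.op (c : ℍ[ℝ]) • v = c • v := by
  ext1 i
  exact mul_coe_eq_smul c (v i)

/-- `EuclideanSpace` needs an `RCLike` scalar field, so `ℍⁿ` is taken as a real inner product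
space, with `⟪v, w⟫ = Re (∑ i, v i * star (w i))`. -/
abbrev QuaternionEuclideanSpace (ι : Type*) := PiLp 2 fun _ : ι => ℍ[ℝ]

section Vectors

variable {ι κ : Type*} [Fintype ι] [Fintype κ]

theorem star_dotProduct_self_eq_norm_sq (v : ι → ℍ[ℝ]) :
    star v ⬝ᵥ v = ((‖WithLp.toLp 2 v‖ ^ 2 : ℝ) : ℍ[ℝ]) := by
  rw [PiLp.norm_sq_eq_of_L2]
  simp [dotProduct, star_mul_self, normSq_eq_norm_mul_self, sq, coe_sum]

theorem star_dotProduct_self_eq_zero {v : ι → ℍ[ℝ]} : star v ⬝ᵥ v = 0 ↔ v = 0 := by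
  rw [star_dotProduct_self_eq_norm_sq, ← coe_zero, coe_inj]
  simp

theorem inner_toLp_eq_re_dotProduct (v w : ι → ℍ[ℝ]) :
    inner ℝ (WithLp.toLp 2 v) (WithLp.toLp 2 w) = (v ⬝ᵥ star w).re := by
  simp [PiLp.inner_apply, inner_def, dotProduct, re_sum]

theorem re_dotProduct_comm (v w : ι → ℍ[ℝ]) : (v ⬝ᵥ w).re = (w ⬝ᵥ v).re := by
  simp only [dotProduct, re_sum]
  exact Finset.sum_congr rfl fun i _ => by simp only [re_mul]; ring

theorem inner_toLp_mulVec_left (A : Matrix ι κ ℍ[ℝ]) (v : κ → ℍ[ℝ]) (w : ι → ℍ[ℝ]) :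
    inner ℝ (WithLp.toLp 2 (A *ᵥ v)) (WithLp.toLp 2 w) =
      inner ℝ (WithLp.toLp 2 v) (WithLp.toLp 2 (Aᴴ *ᵥ w)) := by
  rw [inner_toLp_eq_re_dotProduct, inner_toLp_eq_re_dotProduct, re_dotProduct_comm,
    dotProduct_mulVec, re_dotProduct_comm, star_mulVec, conjTranspose_conjTranspose]

theorem norm_toLp_mulVec_of_mem_unitary [DecidableEq ι] {U : Matrix ι ι ℍ[ℝ]}
    (hU : U ∈ unitary _) (v : ι → ℍ[ℝ]) : ‖WithLp.toLp 2 (U *ᵥ v)‖ = ‖WithLp.toLp 2 v‖ := by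
  have h : star (U *ᵥ v) ⬝ᵥ (U *ᵥ v) = star v ⬝ᵥ v := by
    rw [star_mulVec, dotProduct_mulVec, vecMul_vecMul, ← star_eq_conjTranspose,
      Unitary.star_mul_self_of_mem hU, vecMul_one]
  rw [star_dotProduct_self_eq_norm_sq, star_dotProduct_self_eq_norm_sq, coe_inj] at h
  exact (pow_left_inj₀ (norm_nonneg _) (norm_nonneg _) two_ne_zero).mp h

theorem vecMulVec_star_mul_self (w : ι → ℍ[ℝ]) :
    vecMulVec w (star w) * vecMulVec w (star w) =
      ‖WithLp.toLp 2 w‖ ^ 2 • vecMulVec w (star w) := by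
  rw [vecMulVec_mul_vecMulVec, star_dotProduct_self_eq_norm_sq, vecMulVec_smul',
    op_coe_smul, smul_vecMulVec]

def Matrix.toQuaternionLin (A : Matrix ι κ ℍ[ℝ]) :
    QuaternionEuclideanSpace κ →ₗ[ℝ] QuaternionEuclideanSpace ι where
  toFun v := WithLp.toLp 2 (A *ᵥ v)
  map_add' u v := by simp [mulVec_add]
  map_smul' r v := by simp [mulVec_smul]

omit [Fintype ι] in
@[simp]
theorem Matrix.toQuaternionLin_apply (A : Matrix ι κ ℍ[ℝ]) (v : QuaternionEuclideanSpace κ) :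
    A.toQuaternionLin v = WithLp.toLp 2 (A *ᵥ v) := rfl

theorem Matrix.adjoint_toQuaternionLin (A : Matrix ι κ ℍ[ℝ]) :
    LinearMap.adjoint A.toQuaternionLin = Aᴴ.toQuaternionLin := by
  refine ((LinearMap.eq_adjoint_iff _ _).mpr fun v w => ?_).symm
  simpa using inner_toLp_mulVec_left Aᴴ v.ofLp w.ofLp

end Vectors

section Householder

variable {ι : Type*} [Fintype ι] [DecidableEq ι]

/-- Since `2 / 0 = 0`, `householder 0 = 1`; no lemma below needs `w ≠ 0`. -/
noncomputable def householder (w : ι → ℍ[ℝ]) : Matrix ι ι ℍ[ℝ] :=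
  1 - (2 / ‖WithLp.toLp 2 w‖ ^ 2) • vecMulVec w (star w)

theorem conjTranspose_householder (w : ι → ℍ[ℝ]) : (householder w)ᴴ = householder w := by
  ext i j : 1
  simp [householder, one_apply, Quaternion.star_smul, apply_ite star, eq_comm, vecMulVec_apply]

theorem householder_mul_self (w : ι → ℍ[ℝ]) : householder w * householder w = 1 := by
  have ht : ∀ t : ℝ, (2 / t) * (2 / t) * t = 2 / t + 2 / t := fun t => by
    rcases eq_or_ne t 0 with h | h
    · simp [h]
    · field_simp; ring
  simp only [householder, sub_mul, mul_sub, one_mul, mul_one, smul_mul_smul_comm,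
    vecMulVec_star_mul_self, smul_smul, ht, add_smul]
  abel

theorem householder_mem_unitary (w : ι → ℍ[ℝ]) : householder w ∈ unitary _ := by
  rw [mem_unitary_iff_conjTranspose, conjTranspose_householder, householder_mul_self]
  exact ⟨rfl, rfl⟩

theorem householder_sub_mulVec {x z : ι → ℍ[ℝ]} {r : ℝ} (hxz : star x ⬝ᵥ x = star z ⬝ᵥ z)
    (hr : star x ⬝ᵥ z = r) : householder (x - z) *ᵥ z = x := by
  obtain ⟨s, hs⟩ : ∃ s : ℝ, star z ⬝ᵥ z = s := ⟨_, star_dotProduct_self_eq_norm_sq z⟩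
  set w := x - z
  have hzx : star z ⬝ᵥ x = r := by rw [star_dotProduct, hr, star_coe]
  have hwz : star w ⬝ᵥ z = ((r - s : ℝ) : ℍ[ℝ]) := by
    rw [star_sub, sub_dotProduct, hr, hs, coe_sub]
  have hww : ‖WithLp.toLp 2 w‖ ^ 2 = 2 * (s - r) := by
    rw [← coe_inj, ← star_dotProduct_self_eq_norm_sq, star_sub, sub_dotProduct, dotProduct_sub,
      dotProduct_sub, hxz, hr, hzx, hs, ← coe_sub, ← coe_sub, ← coe_sub]
    congr 1
    ring
  have hscale : (2 / ‖WithLp.toLp 2 w‖ ^ 2 * (s - r)) • w = w := by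
    rcases eq_or_ne s r with h | h
    · have : star w ⬝ᵥ w = 0 := by
        rw [star_dotProduct_self_eq_norm_sq, hww, h, sub_self, mul_zero, coe_zero]
      simp [star_dotProduct_self_eq_zero.mp this]
    · rw [hww, div_mul_eq_mul_div, mul_div_mul_comm, div_self two_ne_zero,
        div_self (sub_ne_zero.mpr h), one_mul, one_smul]
  calc householder w *ᵥ z = z + (2 / ‖WithLp.toLp 2 w‖ ^ 2 * (s - r)) • w := by
        rw [householder, sub_mulVec, one_mulVec, smul_mulVec, vecMulVec_mulVec, hwz,
          op_coe_smul, smul_smul, sub_eq_add_neg, ← neg_smul, ← mul_neg, neg_sub]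
    _ = x := by rw [hscale, add_sub_cancel]

theorem Quaternion.exists_mem_unitary_star_mul_eq_norm (a : ℍ[ℝ]) :
    ∃ c ∈ unitary ℍ[ℝ], star c * a = (‖a‖ : ℍ[ℝ]) := by
  rcases eq_or_ne a 0 with rfl | ha
  · exact ⟨1, one_mem _, by simp⟩
  have hna : ‖a‖ ≠ 0 := norm_ne_zero_iff.mpr ha
  have hunit : normSq ((‖a‖⁻¹ : ℝ) • a) = 1 := by
    rw [normSq_smul, normSq_eq_norm_mul_self]
    field_simp
  refine ⟨(‖a‖⁻¹ : ℝ) • a, Unitary.mem_iff.mpr ⟨?_, ?_⟩, ?_⟩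
  · rw [star_mul_self, hunit, coe_one]
  · rw [self_mul_star, hunit, coe_one]
  · rw [Quaternion.star_smul, smul_mul_assoc, star_mul_self, normSq_eq_norm_mul_self,
      ← coe_mul_eq_smul, ← coe_mul]
    congr 1
    field_simp

theorem exists_mem_unitary_apply_eq (i₀ : ι) {x : ι → ℍ[ℝ]} (hx : star x ⬝ᵥ x = 1) :
    ∃ U ∈ unitary (Matrix ι ι ℍ[ℝ]), ∀ i, U i i₀ = x i := by
  -- The reflection swapping `x` and `z` needs `star x ⬝ᵥ z` real, so `z` is the basis vector
  -- at `i₀` rotated by a unit `c`; the factor `c` is removed again by a diagonal unitary.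
  obtain ⟨c, hc, hca⟩ := exists_mem_unitary_star_mul_eq_norm (x i₀)
  have hz : star (Pi.single i₀ c) ⬝ᵥ Pi.single i₀ c = 1 := by
    rw [← Pi.single_star, single_dotProduct, Pi.single_eq_same, Unitary.star_mul_self_of_mem hc]
  have hxz : star x ⬝ᵥ Pi.single i₀ c = (‖x i₀‖ : ℍ[ℝ]) := by
    rw [dotProduct_single, Pi.star_apply, ← star_star c, ← star_mul, hca, star_coe]
  refine ⟨householder (x - Pi.single i₀ c) * diagonal fun _ => c,
    mul_mem (householder_mem_unitary _) (diagonal_mem_unitary fun _ => hc), fun i => ?_⟩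
  rw [mul_diagonal, ← congrFun (householder_sub_mulVec (hx.trans hz.symm) hxz) i,
    mulVec_single]
  rfl

end Householder

theorem conjTranspose_mul_mul_apply_of_mulVec_col {ι κ : Type*} [Fintype ι] [Fintype κ]
    {A : Matrix ι κ ℍ[ℝ]} {V : Matrix ι ι ℍ[ℝ]} {W : Matrix κ κ ℍ[ℝ]} {i : ι} {j : κ} {c : ℝ}
    (h : A *ᵥ W.col j = c • V.col i) (i' : ι) :
    (Vᴴ * A * W) i' j = c • (Vᴴ * V) i' i :=
  calc (Vᴴ * A * W) i' j = (Vᴴ *ᵥ (A *ᵥ W.col j)) i' := by rw [mulVec_mulVec]; rfl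
    _ = c • (Vᴴ * V) i' i := by rw [h, mulVec_smul]; rfl

theorem diagCons_submatrix_conjTranspose_mul_mul {m n : ℕ}
    {A : Matrix (Fin (m + 1)) (Fin (n + 1)) ℍ[ℝ]} {V : Matrix (Fin (m + 1)) (Fin (m + 1)) ℍ[ℝ]}
    {W : Matrix (Fin (n + 1)) (Fin (n + 1)) ℍ[ℝ]} (hV : V ∈ unitary _) (hW : W ∈ unitary _)
    {σ : ℝ} (hAW : A *ᵥ W.col 0 = σ • V.col 0) (hAV : Aᴴ *ᵥ V.col 0 = σ • W.col 0) :
    diagCons (σ : ℍ[ℝ]) ((Vᴴ * A * W).submatrix Fin.succ Fin.succ) = Vᴴ * A * W := by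
  have hcol (i : Fin (m + 1)) :
      (Vᴴ * A * W) i 0 = σ • (1 : Matrix (Fin (m + 1)) (Fin (m + 1)) ℍ[ℝ]) i 0 := by
    rw [conjTranspose_mul_mul_apply_of_mulVec_col hAW, (mem_unitary_iff_conjTranspose.mp hV).1]
  have hrow (j : Fin (n + 1)) :
      (Vᴴ * A * W)ᴴ j 0 = σ • (1 : Matrix (Fin (n + 1)) (Fin (n + 1)) ℍ[ℝ]) j 0 := by
    rw [conjTranspose_mul, conjTranspose_mul, conjTranspose_conjTranspose, ← Matrix.mul_assoc,
      conjTranspose_mul_mul_apply_of_mulVec_col hAV, (mem_unitary_iff_conjTranspose.mp hW).1]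
  convert diagCons_submatrix_succ (Vᴴ * A * W) (fun j => ?_) (fun i => ?_) using 2
  · simp [hcol, ← coe_mul_eq_smul]
  · simpa [Fin.succ_ne_zero] using congrArg star (hrow j.succ)
  · simp [hcol, Fin.succ_ne_zero]

theorem abs_le_of_norm_mulVec_le {m n : ℕ} {A : Matrix (Fin m) (Fin n) ℍ[ℝ]}
    {V : Matrix (Fin m) (Fin m) ℍ[ℝ]} {W : Matrix (Fin n) (Fin n) ℍ[ℝ]}
    (hV : V ∈ unitary _) (hW : W ∈ unitary _) {s : ℕ → ℝ}
    (hA : A = V * rectDiagonal m n (fun k => (s k : ℍ[ℝ])) * Wᴴ) {C : ℝ}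
    (hC : ∀ v, ‖WithLp.toLp 2 (A *ᵥ v)‖ ≤ C * ‖WithLp.toLp 2 v‖) {k : ℕ} (hkm : k < m)
    (hkn : k < n) : |s k| ≤ C := by
  have hcol : (rectDiagonal m n fun k => (s k : ℍ[ℝ])).col ⟨k, hkn⟩ =
      Pi.single ⟨k, hkm⟩ (s k : ℍ[ℝ]) := by
    ext1 i
    by_cases h : (i : ℕ) = k <;> simp [rectDiagonal, Pi.single_apply, Fin.ext_iff, h]
  have hAW : A *ᵥ (W *ᵥ Pi.single ⟨k, hkn⟩ 1) = V *ᵥ Pi.single ⟨k, hkm⟩ (s k : ℍ[ℝ]) := by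
    rw [hA, mulVec_mulVec, Matrix.mul_assoc, (mem_unitary_iff_conjTranspose.mp hW).1,
      Matrix.mul_one, ← mulVec_mulVec, mulVec_single_one, hcol]
  have := hC (W *ᵥ Pi.single ⟨k, hkn⟩ 1)
  rwa [hAW, norm_toLp_mulVec_of_mem_unitary hV, norm_toLp_mulVec_of_mem_unitary hW,
    ← PiLp.single, ← PiLp.single, PiLp.norm_single, PiLp.norm_single, norm_one, mul_one,
    norm_coe, Real.norm_eq_abs] at this

theorem exists_mem_unitary_eq_mul_diagCons_mul {m n : ℕ}
    (A : Matrix (Fin (m + 1)) (Fin (n + 1)) ℍ[ℝ]) :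
    ∃ σ : ℝ, 0 ≤ σ ∧ (∀ v, ‖WithLp.toLp 2 (A *ᵥ v)‖ ≤ σ * ‖WithLp.toLp 2 v‖) ∧
      ∃ V ∈ unitary (Matrix (Fin (m + 1)) (Fin (m + 1)) ℍ[ℝ]),
      ∃ W ∈ unitary (Matrix (Fin (n + 1)) (Fin (n + 1)) ℍ[ℝ]),
      ∃ A' : Matrix (Fin m) (Fin n) ℍ[ℝ], A = V * diagCons (σ : ℍ[ℝ]) A' * Wᴴ := by
  obtain ⟨σ, x, y, hσ, hx, hy, hxy, hyx, hbound⟩ := A.toQuaternionLin.exists_singular_pair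
  rw [adjoint_toQuaternionLin] at hyx
  have hunit {p : ℕ} {z : QuaternionEuclideanSpace (Fin p)} (hz : ‖z‖ = 1) :
      star ⇑z ⬝ᵥ ⇑z = 1 := by
    simp [star_dotProduct_self_eq_norm_sq, hz]
  obtain ⟨W, hW, hWx⟩ := exists_mem_unitary_apply_eq 0 (hunit hx)
  obtain ⟨V, hV, hVy⟩ := exists_mem_unitary_apply_eq 0 (hunit hy)
  have hAW : A *ᵥ W.col 0 = σ • V.col 0 := by
    have := congrArg WithLp.ofLp hxy
    simp only [toQuaternionLin_apply, WithLp.ofLp_toLp, WithLp.ofLp_smul, ← funext hWx,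
      ← funext hVy] at this
    exact this
  have hAV : Aᴴ *ᵥ V.col 0 = σ • W.col 0 := by
    have := congrArg WithLp.ofLp hyx
    simp only [toQuaternionLin_apply, WithLp.ofLp_toLp, WithLp.ofLp_smul, ← funext hWx,
      ← funext hVy] at this
    exact this
  have hdiag := diagCons_submatrix_conjTranspose_mul_mul hV hW hAW hAV
  refine ⟨σ, hσ, fun v => hbound (WithLp.toLp 2 v), V, hV, W, hW,
    (Vᴴ * A * W).submatrix Fin.succ Fin.succ, ?_⟩
  rw [hdiag]
  calc A = (V * Vᴴ) * A * (W * Wᴴ) := by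
        rw [(mem_unitary_iff_conjTranspose.mp hV).2, (mem_unitary_iff_conjTranspose.mp hW).2,
          Matrix.one_mul, Matrix.mul_one]
    _ = V * (Vᴴ * A * W) * Wᴴ := by simp only [Matrix.mul_assoc]

theorem exists_mem_unitary_eq_mul_rectDiagonal_mul :
    ∀ {m n : ℕ} (A : Matrix (Fin m) (Fin n) ℍ[ℝ]),
      ∃ V ∈ unitary (Matrix (Fin m) (Fin m) ℍ[ℝ]), ∃ W ∈ unitary (Matrix (Fin n) (Fin n) ℍ[ℝ]),
      ∃ s : ℕ → ℝ, 0 ≤ s ∧ AntitoneOn s (Set.Iio (min m n)) ∧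
        A = V * rectDiagonal m n (fun k => (s k : ℍ[ℝ])) * Wᴴ
  | 0, _, A =>
    ⟨1, one_mem _, 1, one_mem _, 0, le_rfl, fun _ hk => by simp at hk, Subsingleton.elim _ _⟩
  | _ + 1, 0, A =>
    ⟨1, one_mem _, 1, one_mem _, 0, le_rfl, fun _ hk => by simp at hk, Subsingleton.elim _ _⟩
  | m + 1, n + 1, A => by
    obtain ⟨σ, hσ, hbound, V₁, hV₁, W₁, hW₁, A', rfl⟩ := exists_mem_unitary_eq_mul_diagCons_mul A
    obtain ⟨V', hV', W', hW', s', hs'0, hs', rfl⟩ := exists_mem_unitary_eq_mul_rectDiagonal_mul A'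
    obtain ⟨s, rfl, rfl⟩ : ∃ s : ℕ → ℝ, s 0 = σ ∧ (fun k => s (k + 1)) = s' :=
      ⟨fun k => Nat.casesOn k σ s', rfl, rfl⟩
    have hV := mul_mem hV₁ (diagCons_one_mem_unitary hV')
    have hW := mul_mem hW₁ (diagCons_one_mem_unitary hW')
    have hA : V₁ * diagCons (s 0 : ℍ[ℝ])
        (V' * rectDiagonal m n (fun k => (s (k + 1) : ℍ[ℝ])) * W'ᴴ) * W₁ᴴ =
        V₁ * diagCons 1 V' * rectDiagonal (m + 1) (n + 1) (fun k => (s k : ℍ[ℝ])) *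
          (W₁ * diagCons 1 W')ᴴ := by
      rw [← diagCons_rectDiagonal, ← diagCons_one_mul_diagCons_mul_conjTranspose]
      simp only [conjTranspose_mul, Matrix.mul_assoc]
    have hs0 : ∀ k < min m n, s (k + 1) ≤ s 0 := fun k hk =>
      (le_abs_self _).trans (abs_le_of_norm_mulVec_le hV hW hA hbound (k := k + 1)
        (by omega) (by omega))
    refine ⟨_, hV, _, hW, s, ?_, ?_, hA⟩
    · rintro (_ | k)
      exacts [hσ, hs'0 k]
    · rw [Nat.add_min_add_right]
      exact antitoneOn_Iio_succ hs' hs0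

/-- Singular value decomposition over the quaternions: every `A ∈ ℍ^{m×n}` factors as
`A = V·Σ·Wᴴ` with `V`, `W` unitary and `Σ` a "diagonal" matrix with nonnegative real,
nonincreasing diagonal entries. -/
theorem quaternion_svd (m n : ℕ) (A : Matrix (Fin m) (Fin n) ℍ[ℝ]) :
    ∃ (V : Matrix (Fin m) (Fin m) ℍ[ℝ]) (W : Matrix (Fin n) (Fin n) ℍ[ℝ])
      (S : Matrix (Fin m) (Fin n) ℍ[ℝ]),
      (Vᴴ * V = 1 ∧ V * Vᴴ = 1) ∧ (Wᴴ * W = 1 ∧ W * Wᴴ = 1) ∧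
      (∀ (i : Fin m) (j : Fin n), (i : ℕ) ≠ (j : ℕ) → S i j = 0) ∧
      (∀ (i : Fin m) (j : Fin n), (i : ℕ) = (j : ℕ) →
        ∃ r : ℝ, 0 ≤ r ∧ S i j = (r : ℍ[ℝ])) ∧
      (∀ (i i' : Fin m) (j j' : Fin n), (i : ℕ) = (j : ℕ) → (i' : ℕ) = (j' : ℕ) →
        (i : ℕ) ≤ (i' : ℕ) → (S i' j').re ≤ (S i j).re) ∧
      A = V * S * Wᴴ := by
  obtain ⟨V, hV, W, hW, s, hs0, hs, hA⟩ := exists_mem_unitary_eq_mul_rectDiagonal_mul A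
  refine ⟨V, W, _, mem_unitary_iff_conjTranspose.mp hV, mem_unitary_iff_conjTranspose.mp hW,
    fun i j hij => ?_, fun i j hij => ⟨s i, hs0 i, ?_⟩, fun i i' j j' hij hij' hii' => ?_, hA⟩
  · simp [rectDiagonal, hij]
  · simp [rectDiagonal, hij]
  · have hi' : (i' : ℕ) < min m n := lt_min i'.isLt (hij' ▸ j'.isLt)
    simpa [rectDiagonal, hij, hij'] using hs (hii'.trans_lt hi') hi' hii'
end

section
/- A square quaternion matrix A ∈ ℍ^{n×n} is Hermitian (Aᴴ = A) if and only if there exist a unitary matrix U ∈ ℍ^{n×n} and real numbers λ₁, …, λₙ such that A = U·D·Uᴴ, where D = diag(λ₁, …, λₙ) is the diagonal quaternion matrix whose diagonal entries are the real numbers λ₁, …, λₙ. -/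
/-!
Realify: `x ↦ A x` is a symmetric operator on `ℍⁿ ≅ ℝ⁴ⁿ` for the inner product `Re (yᴴ x)`, so by
the real spectral theorem it has a unit eigenvector, with a real eigenvalue, in every nonzero
invariant subspace. If the columns of `U` are orthonormal eigenvectors of `A`, then
`{x | Uᴴ x = 0}` is invariant, because `Uᴴ A = (A U)ᴴ`, and it is nonzero while `U` has fewer
than `n` columns, being cut out by `4k` real equations in `4n` unknowns. Adding such eigenvectors
one at a time gives `U` with `Uᴴ U = 1` and `A U = U D`; a one-sided inverse of a square
quaternion matrix is two-sided.
-/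

open scoped Quaternion Matrix
open Matrix

lemma LinearMap.IsSymmetric.exists_eigenvector_mem_of_invariant {E : Type*}
    [NormedAddCommGroup E] [InnerProductSpace ℝ E] [FiniteDimensional ℝ E] {T : E →ₗ[ℝ] E}
    (hT : T.IsSymmetric) {W : Submodule ℝ E} (hW : ∀ x ∈ W, T x ∈ W) (hW₀ : W ≠ ⊥) :
    ∃ x ∈ W, ‖x‖ = 1 ∧ ∃ ν : ℝ, T x = ν • x := by
  have hpos : 0 < Module.finrank ℝ W := by
    rwa [Module.finrank_pos_iff, Submodule.nontrivial_iff_ne_bot]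
  have hS := hT.restrict_invariant hW
  let b := hS.eigenvectorBasis rfl
  let i : Fin (Module.finrank ℝ W) := ⟨0, hpos⟩
  refine ⟨b i, (b i).2, (Submodule.coe_norm _).symm.trans (b.norm_eq_one i),
    hS.eigenvalues rfl i, ?_⟩
  exact congrArg Subtype.val (hS.apply_eigenvectorBasis rfl i)

lemma Quaternion.re_mul_comm {R : Type*} [CommRing R] (a b : ℍ[R]) : (a * b).re = (b * a).re := by
  simp only [Quaternion.re_mul]; ring

namespace QuaternionMatrix

section Realification

variable {n k : Type*} [Fintype n]

lemma inner_eq_re_star_dotProduct (x y : PiLp 2 fun _ : n => ℍ[ℝ]) :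
    inner ℝ x y = (star y.ofLp ⬝ᵥ x.ofLp).re := by
  simp only [PiLp.inner_apply, Quaternion.inner_def, dotProduct, Pi.star_apply,
    Quaternion.re_mul_comm (x.ofLp _)]
  exact (map_sum (QuaternionAlgebra.reₗ (R := ℝ) (-1) 0 (-1))
    (fun i => star (y.ofLp i) * x.ofLp i) _).symm

lemma star_dotProduct_self (x : PiLp 2 fun _ : n => ℍ[ℝ]) :
    star x.ofLp ⬝ᵥ x.ofLp = ((‖x‖ ^ 2 : ℝ) : ℍ[ℝ]) := by
  simp only [dotProduct, Pi.star_apply, Quaternion.star_mul_self, PiLp.norm_sq_eq_of_L2,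
    Quaternion.normSq_eq_norm_mul_self, ← sq]
  exact (map_sum (algebraMap ℝ ℍ[ℝ]) _ _).symm

lemma finrank_piLp_quaternion :
    Module.finrank ℝ (PiLp 2 fun _ : n => ℍ[ℝ]) = Fintype.card n * 4 := by
  rw [(WithLp.linearEquiv 2 ℝ (n → ℍ[ℝ])).finrank_eq]
  simp [Module.finrank_pi_fintype, Quaternion.finrank_eq_four]

def toEuclideanLin [Fintype k] (A : Matrix n k ℍ[ℝ]) :
    (PiLp 2 fun _ : k => ℍ[ℝ]) →ₗ[ℝ] PiLp 2 fun _ : n => ℍ[ℝ] where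
  toFun x := WithLp.toLp 2 (A *ᵥ x.ofLp)
  map_add' x y := by simp [mulVec_add]
  map_smul' r x := by simp [mulVec_smul]

lemma isSymmetric_toEuclideanLin {A : Matrix n n ℍ[ℝ]} (hA : A.IsHermitian) :
    (toEuclideanLin A).IsSymmetric := by
  intro x y
  simp only [toEuclideanLin, LinearMap.coe_mk, AddHom.coe_mk, inner_eq_re_star_dotProduct,
    dotProduct_mulVec, star_mulVec, hA.eq]

def orthogonalCols (U : Matrix n k ℍ[ℝ]) : Submodule ℝ (PiLp 2 fun _ : n => ℍ[ℝ]) :=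
  LinearMap.ker (toEuclideanLin Uᴴ)

lemma mem_orthogonalCols {U : Matrix n k ℍ[ℝ]} {x : PiLp 2 fun _ : n => ℍ[ℝ]} :
    x ∈ orthogonalCols U ↔ Uᴴ *ᵥ x.ofLp = 0 := by
  simp [orthogonalCols, toEuclideanLin]

lemma orthogonalCols_ne_bot [Fintype k] (U : Matrix n k ℍ[ℝ])
    (hk : Fintype.card k < Fintype.card n) : orthogonalCols U ≠ ⊥ :=
  LinearMap.ker_ne_bot_of_finrank_lt <| by
    rw [finrank_piLp_quaternion, finrank_piLp_quaternion]; omega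

lemma toEuclideanLin_mem_orthogonalCols [Fintype k] {A : Matrix n n ℍ[ℝ]} (hA : A.IsHermitian)
    {U : Matrix n k ℍ[ℝ]} {M : Matrix k k ℍ[ℝ]} (hAU : A * U = U * M)
    {x : PiLp 2 fun _ : n => ℍ[ℝ]} (hx : x ∈ orthogonalCols U) :
    toEuclideanLin A x ∈ orthogonalCols U := by
  rw [mem_orthogonalCols] at hx ⊢
  calc Uᴴ *ᵥ (A *ᵥ x.ofLp) = (A * U)ᴴ *ᵥ x.ofLp := by
        rw [mulVec_mulVec, conjTranspose_mul, hA.eq]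
    _ = 0 := by rw [hAU, conjTranspose_mul, ← mulVec_mulVec, hx, mulVec_zero]

lemma exists_unit_eigenvector_orthogonal [Fintype k] {A : Matrix n n ℍ[ℝ]} (hA : A.IsHermitian)
    {U : Matrix n k ℍ[ℝ]} {M : Matrix k k ℍ[ℝ]} (hAU : A * U = U * M)
    (hk : Fintype.card k < Fintype.card n) :
    ∃ (x : n → ℍ[ℝ]) (ν : ℝ), star x ⬝ᵥ x = 1 ∧ Uᴴ *ᵥ x = 0 ∧ A *ᵥ x = ν • x := by
  obtain ⟨x, hxU, hx, ν, hAx⟩ := (isSymmetric_toEuclideanLin hA).exists_eigenvector_mem_of_invariant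
    (fun _ => toEuclideanLin_mem_orthogonalCols hA hAU) (orthogonalCols_ne_bot U hk)
  exact ⟨x.ofLp, ν, by rw [star_dotProduct_self, hx, one_pow, Quaternion.coe_one],
    mem_orthogonalCols.mp hxU, congrArg WithLp.ofLp hAx⟩

end Realification

section Eigenframe

variable {n k l : Type*} [Fintype n] [Fintype k] [Fintype l] [DecidableEq k] [DecidableEq l]

structure IsOrthonormalEigenframe (A : Matrix n n ℍ[ℝ]) (U : Matrix n k ℍ[ℝ]) (μ : k → ℝ) :
    Prop where
  conjTranspose_mul_self : Uᴴ * U = 1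
  mul_eq_mul_diagonal : A * U = U * diagonal (fun i => (μ i : ℍ[ℝ]))

namespace IsOrthonormalEigenframe

variable {A : Matrix n n ℍ[ℝ]}

lemma fromCols {U : Matrix n k ℍ[ℝ]} {V : Matrix n l ℍ[ℝ]}
    {μ : k → ℝ} {ν : l → ℝ} (hU : IsOrthonormalEigenframe A U μ)
    (hV : IsOrthonormalEigenframe A V ν) (hUV : Uᴴ * V = 0) :
    IsOrthonormalEigenframe A (fromCols U V) (Sum.elim μ ν) where
  conjTranspose_mul_self := by
    have hVU : Vᴴ * U = 0 := by rw [← conjTranspose_conjTranspose U, ← conjTranspose_mul, hUV,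
      conjTranspose_zero]
    rw [conjTranspose_fromCols_eq_fromRows_conjTranspose, fromRows_mul_fromCols,
      hU.conjTranspose_mul_self, hV.conjTranspose_mul_self, hUV, hVU, fromBlocks_one]
  mul_eq_mul_diagonal := by
    have : (fun i => ((Sum.elim μ ν i : ℝ) : ℍ[ℝ])) =
        Sum.elim (fun i => (μ i : ℍ[ℝ])) (fun i => (ν i : ℍ[ℝ])) := by
      ext (i | i) <;> rfl
    rw [this, ← fromBlocks_diagonal, fromCols_mul_fromBlocks, mul_fromCols,
      hU.mul_eq_mul_diagonal, hV.mul_eq_mul_diagonal]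
    simp

lemma reindex {U : Matrix n k ℍ[ℝ]} {μ : k → ℝ}
    (hU : IsOrthonormalEigenframe A U μ) (e : k ≃ l) :
    IsOrthonormalEigenframe A (U.submatrix id e.symm) (μ ∘ e.symm) where
  conjTranspose_mul_self := by
    rw [conjTranspose_submatrix, ← submatrix_mul _ _ _ _ _ Function.bijective_id,
      hU.conjTranspose_mul_self, submatrix_one_equiv]
  mul_eq_mul_diagonal := by
    have hD : (diagonal fun i => ((μ ∘ e.symm) i : ℍ[ℝ])) =
        (diagonal fun i => (μ i : ℍ[ℝ])).submatrix e.symm e.symm := by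
      rw [submatrix_diagonal_equiv]; rfl
    rw [hD, submatrix_mul_equiv, ← submatrix_id_id A,
      ← submatrix_mul _ _ _ _ _ Function.bijective_id, hU.mul_eq_mul_diagonal]

lemma replicateCol {x : n → ℍ[ℝ]} {ν : ℝ} (hx : star x ⬝ᵥ x = 1) (hAx : A *ᵥ x = ν • x) :
    IsOrthonormalEigenframe A (replicateCol (Fin 1) x) (fun _ => ν) where
  conjTranspose_mul_self := by
    rw [conjTranspose_replicateCol, replicateRow_mul_replicateCol, hx]
    exact Matrix.ext fun i j => by rw [Subsingleton.elim i j, one_apply_eq, of_apply]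
  mul_eq_mul_diagonal := Matrix.ext fun i j => by
    rw [← replicateCol_mulVec, hAx, mul_diagonal]
    simp [Quaternion.mul_coe_eq_smul]

lemma mul_conjTranspose_self [DecidableEq n] {U : Matrix n k ℍ[ℝ]} {μ : k → ℝ}
    (hU : IsOrthonormalEigenframe A U μ) (hk : Fintype.card k = Fintype.card n) :
    U * Uᴴ = 1 :=
  (mul_eq_one_comm_of_card_eq k n ℍ[ℝ] hk).mp hU.conjTranspose_mul_self

lemma eq_mul_diagonal_mul_conjTranspose [DecidableEq n] {U : Matrix n k ℍ[ℝ]} {μ : k → ℝ}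
    (hU : IsOrthonormalEigenframe A U μ) (hUU : U * Uᴴ = 1) :
    A = U * diagonal (fun i => (μ i : ℍ[ℝ])) * Uᴴ := by
  rw [← hU.mul_eq_mul_diagonal, Matrix.mul_assoc, hUU, Matrix.mul_one]

end IsOrthonormalEigenframe

lemma exists_isOrthonormalEigenframe {A : Matrix n n ℍ[ℝ]} (hA : A.IsHermitian) :
    ∀ j ≤ Fintype.card n, ∃ (U : Matrix n (Fin j) ℍ[ℝ]) (μ : Fin j → ℝ),
      IsOrthonormalEigenframe A U μ
  | 0, _ => ⟨0, finZeroElim, Subsingleton.elim _ _, Subsingleton.elim _ _⟩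
  | j + 1, hj => by
    obtain ⟨U, μ, hU⟩ := exists_isOrthonormalEigenframe hA j (by omega)
    obtain ⟨x, ν, hx, hUx, hAx⟩ :=
      exists_unit_eigenvector_orthogonal hA hU.mul_eq_mul_diagonal (by simpa using hj)
    have hUV : Uᴴ * replicateCol (Fin 1) x = 0 := by
      rw [← replicateCol_mulVec, hUx, replicateCol_zero]
    exact ⟨_, _, (hU.fromCols (.replicateCol hx hAx) hUV).reindex finSumFinEquiv⟩

end Eigenframe

end QuaternionMatrix

/-- A square quaternion matrix is Hermitian if and only if it is unitarily diagonalizable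
with real diagonal entries: `A = U·D·Uᴴ` where `U` is unitary and `D = diag(λ₁,…,λₙ)` with
`λᵢ ∈ ℝ`. -/
theorem hermitian_iff_unitarily_diagonalizable (n : ℕ) (A : Matrix (Fin n) (Fin n) ℍ[ℝ]) :
    Aᴴ = A ↔
      ∃ (U : Matrix (Fin n) (Fin n) ℍ[ℝ]) (lam : Fin n → ℝ),
        (Uᴴ * U = 1 ∧ U * Uᴴ = 1) ∧
        A = U * Matrix.diagonal (fun i => (lam i : ℍ[ℝ])) * Uᴴ := by
  constructor
  · intro hA
    obtain ⟨U, μ, hU⟩ := QuaternionMatrix.exists_isOrthonormalEigenframe hA n (by simp)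
    have hUU := hU.mul_conjTranspose_self rfl
    exact ⟨U, μ, ⟨hU.conjTranspose_mul_self, hUU⟩, hU.eq_mul_diagonal_mul_conjTranspose hUU⟩
  · rintro ⟨U, lam, -, rfl⟩
    exact isHermitian_mul_mul_conjTranspose U
      (isHermitian_diagonal_iff.mpr fun i => Quaternion.star_coe (lam i))
end

section
/- For every quaternion matrix A ∈ ℍ^{m×n}, every right eigenvalue of AᴴA is a nonnegative real number: if λ ∈ ℍ and there exists a nonzero vector x ∈ ℍ^n with (AᴴA)·x = x·λ (componentwise, ((AᴴA)·x)ᵢ = xᵢ·λ for all i), then λ is a real quaternion and λ ≥ 0. -/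
/-! Pairing the eigen-equation with `x` from the left gives `‖A x‖² = xᴴ(AᴴA x) = xᴴ(x λ) = ‖x‖² λ`;
the eigenvalue sits on the right, so it factors out of the sum, and `λ = ‖A x‖² / ‖x‖²`. -/

open scoped Quaternion Matrix

open Matrix in
theorem Matrix.star_dotProduct_conjTranspose_mul_self_mulVec {R m n : Type*} [Fintype m]
    [Fintype n] [Semiring R] [StarRing R] (A : Matrix m n R) (x : n → R) :
    star x ⬝ᵥ (Aᴴ * A) *ᵥ x = star (A *ᵥ x) ⬝ᵥ A *ᵥ x := by
  rw [← mulVec_mulVec, dotProduct_mulVec, star_mulVec]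

namespace Quaternion

variable {R ι : Type*} [Fintype ι]

theorem star_dotProduct_self [CommRing R] (v : ι → ℍ[R]) :
    star v ⬝ᵥ v = ((∑ i, normSq (v i) : R) : ℍ[R]) := by
  simp only [dotProduct, Pi.star_apply, star_mul_self]
  exact (map_sum (algebraMap R ℍ[R]) _ _).symm

theorem sum_normSq_pos [CommRing R] [LinearOrder R] [IsStrictOrderedRing R] {v : ι → ℍ[R]}
    (hv : v ≠ 0) : 0 < ∑ i, normSq (v i) := by
  obtain ⟨i, hi⟩ := Function.ne_iff.mp hv
  exact Finset.sum_pos' (fun j _ => normSq_nonneg)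
    ⟨i, Finset.mem_univ i, normSq_nonneg.lt_of_ne' (normSq_ne_zero.mpr hi)⟩

theorem eq_coe_div_of_coe_mul_eq_coe [Field R] {c d : R} {q : ℍ[R]} (hc : c ≠ 0)
    (h : (c : ℍ[R]) * q = d) : q = ((d / c : R) : ℍ[R]) := by
  calc q = ((c⁻¹ * c : R) : ℍ[R]) * q := by rw [inv_mul_cancel₀ hc, coe_one, one_mul]
    _ = ((d / c : R) : ℍ[R]) := by rw [coe_mul, mul_assoc, h, ← coe_mul, div_eq_inv_mul]

end Quaternion

open Matrix Quaternion in
/-- Every right eigenvalue of `AᴴA` is a nonnegative real number, for any quaternion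
matrix `A`. -/
theorem right_eigenvalue_conjTranspose_mul_self_nonneg (m n : ℕ)
    (A : Matrix (Fin m) (Fin n) ℍ[ℝ]) (lam : ℍ[ℝ]) (x : Fin n → ℍ[ℝ]) (hx : x ≠ 0)
    (heig : ∀ i, (Aᴴ * A).mulVec x i = x i * lam) :
    ∃ r : ℝ, 0 ≤ r ∧ lam = (r : ℍ[ℝ]) := by
  have hquad : star x ⬝ᵥ (Aᴴ * A) *ᵥ x = (star x ⬝ᵥ x) * lam := by
    simp only [dotProduct, heig, Finset.sum_mul, mul_assoc]
  rw [star_dotProduct_conjTranspose_mul_self_mulVec, star_dotProduct_self,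
    star_dotProduct_self] at hquad
  have hpos : 0 < ∑ i, normSq (x i) := sum_normSq_pos hx
  exact ⟨_, div_nonneg (Finset.sum_nonneg fun k _ => normSq_nonneg) hpos.le,
    eq_coe_div_of_coe_mul_eq_coe hpos.ne' hquad.symm⟩
end
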